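/- deriveF computes the derivative of a focused syntax: for every LL(1) focused syntax (s, c) and token t, if deriveF t (s, c) = some (s', c') then for all token sequences ts and values v, Matches (unfocus (s', c')) ts v if and only if Matches (unfocus (s, c)) (t :: ts) v. -/

import Mathlib

set_option autoImplicit false

/-! Both phases of `deriveF` rewrite the focused syntax without changing its parses of inputs
starting with `t` and without leaving LL(1). Moving the focus past a nullable `s` with
`kd t ∉ First s` (in `locate`, through `plug`, and in `pierce` at a `seqn`) replaces `s` by
`eps v`: a parse of `t :: ts` must read the empty word with `s`, and LL(1)-ness makes `v` the only
value of such a parse. Entering the branch of a disjunction whose first set contains `kd t` loses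
nothing either: the other branch cannot start with `kd t`, and could only contribute through an
empty parse followed by `t`, a should-not-follow conflict in the enclosing context. At the end,
`eps t` in place of `elem (kd t)` reads one token less and yields the same value. LL(1)-ness
survives because each replacement has no more nullable values, first kinds, should-not-follow
kinds, productivity or conflicts than what it replaces. -/

/-- Context-free syntaxes (value-aware context-free expressions). -/
inductive Syn (Token Kind : Type) (Var : Type → Type) : Type → Type 1 where
  | elem (k : Kind) : Syn Token Kind Var Token
  | fail {A : Type} : Syn Token Kind Var A
  | eps {A : Type} (v : A) : Syn Token Kind Var A
  | disj {A : Type} (s₁ s₂ : Syn Token Kind Var A) : Syn Token Kind Var A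
  | seqn {A B : Type} (s₁ : Syn Token Kind Var A) (s₂ : Syn Token Kind Var B) :
      Syn Token Kind Var (A × B)
  | map {A B : Type} (f : A → B) (s : Syn Token Kind Var A) : Syn Token Kind Var B
  | var {A : Type} (x : Var A) : Syn Token Kind Var A

section

variable {Token Kind : Type} {Var : Type → Type}
variable (kd : Token → Kind) (env : ∀ A : Type, Var A → Syn Token Kind Var A)

/-- Semantics of syntaxes. -/
inductive Matches : ∀ {A : Type}, Syn Token Kind Var A → List Token → A → Prop where
  | elem {k : Kind} {t : Token} (h : kd t = k) : Matches (Syn.elem k) [t] t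
  | eps {A : Type} (v : A) : Matches (Syn.eps v) [] v
  | disjL {A : Type} {s₁ s₂ : Syn Token Kind Var A} {ts : List Token} {v : A} :
      Matches s₁ ts v → Matches (Syn.disj s₁ s₂) ts v
  | disjR {A : Type} {s₁ s₂ : Syn Token Kind Var A} {ts : List Token} {v : A} :
      Matches s₂ ts v → Matches (Syn.disj s₁ s₂) ts v
  | seqn {A B : Type} {s₁ : Syn Token Kind Var A} {s₂ : Syn Token Kind Var B}
      {ts₁ ts₂ : List Token} {v₁ : A} {v₂ : B} :
      Matches s₁ ts₁ v₁ → Matches s₂ ts₂ v₂ →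
      Matches (Syn.seqn s₁ s₂) (ts₁ ++ ts₂) (v₁, v₂)
  | map {A B : Type} (f : A → B) {s : Syn Token Kind Var A} {ts : List Token} {v : A} :
      Matches s ts v → Matches (Syn.map f s) ts (f v)
  | var {A : Type} (x : Var A) {ts : List Token} {v : A} :
      Matches (env A x) ts v → Matches (Syn.var x) ts v

/-- Productivity. -/
inductive Productive : ∀ {A : Type}, Syn Token Kind Var A → Prop where
  | eps {A : Type} (v : A) : Productive (Syn.eps v)
  | elem (k : Kind) : Productive (Syn.elem k)
  | disjL {A : Type} {s₁ s₂ : Syn Token Kind Var A} :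
      Productive s₁ → Productive (Syn.disj s₁ s₂)
  | disjR {A : Type} {s₁ s₂ : Syn Token Kind Var A} :
      Productive s₂ → Productive (Syn.disj s₁ s₂)
  | seqn {A B : Type} {s₁ : Syn Token Kind Var A} {s₂ : Syn Token Kind Var B} :
      Productive s₁ → Productive s₂ → Productive (Syn.seqn s₁ s₂)
  | map {A B : Type} (f : A → B) {s : Syn Token Kind Var A} :
      Productive s → Productive (Syn.map f s)
  | var {A : Type} (x : Var A) : Productive (env A x) → Productive (Syn.var x)

/-- Nullability, with associated value. -/
inductive Nullable : ∀ {A : Type}, Syn Token Kind Var A → A → Prop where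
  | eps {A : Type} (v : A) : Nullable (Syn.eps v) v
  | disjL {A : Type} {s₁ s₂ : Syn Token Kind Var A} {v : A} :
      Nullable s₁ v → Nullable (Syn.disj s₁ s₂) v
  | disjR {A : Type} {s₁ s₂ : Syn Token Kind Var A} {v : A} :
      Nullable s₂ v → Nullable (Syn.disj s₁ s₂) v
  | seqn {A B : Type} {s₁ : Syn Token Kind Var A} {s₂ : Syn Token Kind Var B} {v₁ : A} {v₂ : B} :
      Nullable s₁ v₁ → Nullable s₂ v₂ → Nullable (Syn.seqn s₁ s₂) (v₁, v₂)
  | map {A B : Type} (f : A → B) {s : Syn Token Kind Var A} {v : A} :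
      Nullable s v → Nullable (Syn.map f s) (f v)
  | var {A : Type} (x : Var A) {v : A} : Nullable (env A x) v → Nullable (Syn.var x) v

/-- First sets: `InFirst env k s` means `k ∈ First s`. -/
inductive InFirst : ∀ {A : Type}, Kind → Syn Token Kind Var A → Prop where
  | elem (k : Kind) : InFirst k (Syn.elem k)
  | disjL {A : Type} {k : Kind} {s₁ s₂ : Syn Token Kind Var A} :
      InFirst k s₁ → InFirst k (Syn.disj s₁ s₂)
  | disjR {A : Type} {k : Kind} {s₁ s₂ : Syn Token Kind Var A} :
      InFirst k s₂ → InFirst k (Syn.disj s₁ s₂)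
  | seqnL {A B : Type} {k : Kind} {s₁ : Syn Token Kind Var A} {s₂ : Syn Token Kind Var B} :
      InFirst k s₁ → Productive env s₂ → InFirst k (Syn.seqn s₁ s₂)
  | seqnR {A B : Type} {k : Kind} {s₁ : Syn Token Kind Var A} {s₂ : Syn Token Kind Var B}
      {v : A} : Nullable env s₁ v → InFirst k s₂ → InFirst k (Syn.seqn s₁ s₂)
  | map {A B : Type} {k : Kind} (f : A → B) {s : Syn Token Kind Var A} :
      InFirst k s → InFirst k (Syn.map f s)
  | var {A : Type} {k : Kind} (x : Var A) : InFirst k (env A x) → InFirst k (Syn.var x)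

/-- Should-not-follow sets: `InSNF env k s` means `k ∈ ShouldNotFollow s`. -/
inductive InSNF : ∀ {A : Type}, Kind → Syn Token Kind Var A → Prop where
  | disjL {A : Type} {k : Kind} {s₁ s₂ : Syn Token Kind Var A} :
      InSNF k s₁ → InSNF k (Syn.disj s₁ s₂)
  | disjR {A : Type} {k : Kind} {s₁ s₂ : Syn Token Kind Var A} :
      InSNF k s₂ → InSNF k (Syn.disj s₁ s₂)
  | disjFN {A : Type} {k : Kind} {s₁ s₂ : Syn Token Kind Var A} {v : A} :
      InFirst env k s₁ → Nullable env s₂ v → InSNF k (Syn.disj s₁ s₂)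
  | disjNF {A : Type} {k : Kind} {s₁ s₂ : Syn Token Kind Var A} {v : A} :
      Nullable env s₁ v → InFirst env k s₂ → InSNF k (Syn.disj s₁ s₂)
  | seqnL {A B : Type} {k : Kind} {s₁ : Syn Token Kind Var A} {s₂ : Syn Token Kind Var B}
      {v : B} : InSNF k s₁ → Nullable env s₂ v → InSNF k (Syn.seqn s₁ s₂)
  | seqnR {A B : Type} {k : Kind} {s₁ : Syn Token Kind Var A} {s₂ : Syn Token Kind Var B} :
      Productive env s₁ → InSNF k s₂ → InSNF k (Syn.seqn s₁ s₂)
  | map {A B : Type} {k : Kind} (f : A → B) {s : Syn Token Kind Var A} :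
      InSNF k s → InSNF k (Syn.map f s)
  | var {A : Type} {k : Kind} (x : Var A) : InSNF k (env A x) → InSNF k (Syn.var x)

/-- LL(1) conflicts. A syntax `s` is LL(1) iff `¬ HasConflict env s`. -/
inductive HasConflict : ∀ {A : Type}, Syn Token Kind Var A → Prop where
  | disjNN {A : Type} {s₁ s₂ : Syn Token Kind Var A} {v₁ v₂ : A} :
      Nullable env s₁ v₁ → Nullable env s₂ v₂ → HasConflict (Syn.disj s₁ s₂)
  | disjFF {A : Type} {s₁ s₂ : Syn Token Kind Var A} {k : Kind} :
      InFirst env k s₁ → InFirst env k s₂ → HasConflict (Syn.disj s₁ s₂)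
  | disjL {A : Type} {s₁ s₂ : Syn Token Kind Var A} :
      HasConflict s₁ → HasConflict (Syn.disj s₁ s₂)
  | disjR {A : Type} {s₁ s₂ : Syn Token Kind Var A} :
      HasConflict s₂ → HasConflict (Syn.disj s₁ s₂)
  | seqnSF {A B : Type} {s₁ : Syn Token Kind Var A} {s₂ : Syn Token Kind Var B} {k : Kind} :
      InSNF env k s₁ → InFirst env k s₂ → HasConflict (Syn.seqn s₁ s₂)
  | seqnL {A B : Type} {s₁ : Syn Token Kind Var A} {s₂ : Syn Token Kind Var B} :
      HasConflict s₁ → HasConflict (Syn.seqn s₁ s₂)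
  | seqnR {A B : Type} {s₁ : Syn Token Kind Var A} {s₂ : Syn Token Kind Var B} :
      HasConflict s₂ → HasConflict (Syn.seqn s₁ s₂)
  | map {A B : Type} (f : A → B) {s : Syn Token Kind Var A} :
      HasConflict s → HasConflict (Syn.map f s)
  | var {A : Type} (x : Var A) : HasConflict (env A x) → HasConflict (Syn.var x)

end

/-- Layers of a context, with above type `A` and below type `B`. -/
inductive Layer (Token Kind : Type) (Var : Type → Type) : Type → Type → Type 1 where
  | apply {A B : Type} (f : A → B) : Layer Token Kind Var A B
  | prepend {A C : Type} (v : C) : Layer Token Kind Var A (C × A)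
  | followBy {A C : Type} (s : Syn Token Kind Var C) : Layer Token Kind Var A (A × C)

/-- Type-aligned contexts (stacks of layers). -/
inductive Ctx (Token Kind : Type) (Var : Type → Type) : Type → Type → Type 1 where
  | nil {A : Type} : Ctx Token Kind Var A A
  | cons {A B C : Type} (l : Layer Token Kind Var A B) (c : Ctx Token Kind Var B C) :
      Ctx Token Kind Var A C

section

variable {Token Kind : Type} {Var : Type → Type}

def Ctx.isNil : ∀ {A B : Type}, Ctx Token Kind Var A B → Bool
  | _, _, Ctx.nil => true
  | _, _, Ctx.cons _ _ => false

/-- Unfocusing a focused syntax. -/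
def unfocus : ∀ {A B : Type}, Syn Token Kind Var A → Ctx Token Kind Var A B →
    Syn Token Kind Var B
  | _, _, s, Ctx.nil => s
  | _, _, s, Ctx.cons (Layer.apply f) c => unfocus (Syn.map f s) c
  | _, _, s, Ctx.cons (Layer.prepend v) c => unfocus (Syn.seqn (Syn.eps v) s) c
  | _, _, s, Ctx.cons (Layer.followBy s') c => unfocus (Syn.seqn s s') c

/-- Focused syntaxes with below type `B`. -/
def Focused (Token Kind : Type) (Var : Type → Type) (B : Type) : Type 1 :=
  (A : Type) × Syn Token Kind Var A × Ctx Token Kind Var A B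

def unfocusF {B : Type} (fs : Focused Token Kind Var B) : Syn Token Kind Var B :=
  unfocus fs.2.1 fs.2.2

def focusF {A : Type} (s : Syn Token Kind Var A) : Focused Token Kind Var A :=
  ⟨A, s, Ctx.nil⟩

/-- Plugging a value into a context. -/
def plug : ∀ {A B : Type}, A → Ctx Token Kind Var A B → Focused Token Kind Var B
  | A, _, v, Ctx.nil => ⟨A, Syn.eps v, Ctx.nil⟩
  | _, _, v, Ctx.cons (Layer.apply f) c => plug (f v) c
  | _, _, v, Ctx.cons (Layer.prepend v') c => plug (v', v) c
  | _, _, v, Ctx.cons (Layer.followBy s) c => ⟨_, s, Ctx.cons (Layer.prepend v) c⟩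

end

section

variable {Token Kind : Type} {Var : Type → Type}
variable {kd : Token → Kind} {env : ∀ A : Type, Var A → Syn Token Kind Var A}

-- Predicates are inverted at `seqn` through these two definitions, because `cases` fails on
-- the unification problem `A × B = A' × B'`.
def Syn.SeqnCase (P : ∀ {A B : Type}, Syn Token Kind Var A → Syn Token Kind Var B → Prop) :
    ∀ {C : Type}, Syn Token Kind Var C → Prop
  | _, .seqn s₁ s₂ => P s₁ s₂
  | _, _ => True

def Syn.SeqnCaseVal
    (P : ∀ {A B : Type}, Syn Token Kind Var A → Syn Token Kind Var B → A × B → Prop) :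
    ∀ {C : Type}, Syn Token Kind Var C → C → Prop
  | _, .seqn s₁ s₂, v => P s₁ s₂ v
  | _, _, _ => True

variable {A B : Type} {s s₁ s₂ : Syn Token Kind Var A} {ts : List Token} {t : Token} {k : Kind}

theorem matches_elem_iff {v : Token} :
    Matches kd env (.elem k) ts v ↔ ts = [v] ∧ kd v = k :=
  ⟨fun h => by cases h; exact ⟨rfl, ‹_›⟩, fun ⟨hts, hk⟩ => hts ▸ .elem hk⟩

theorem matches_eps_iff {u v : A} : Matches kd env (.eps u) ts v ↔ ts = [] ∧ v = u :=
  ⟨fun h => by cases h; exact ⟨rfl, rfl⟩, by rintro ⟨rfl, rfl⟩; exact .eps _⟩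

theorem matches_disj_iff {v : A} :
    Matches kd env (.disj s₁ s₂) ts v ↔ Matches kd env s₁ ts v ∨ Matches kd env s₂ ts v :=
  ⟨fun h => by cases h <;> simp only [*, true_or, or_true], fun h => h.elim .disjL .disjR⟩

theorem matches_map_iff {f : A → B} {v : B} :
    Matches kd env (.map f s) ts v ↔ ∃ u, Matches kd env s ts u ∧ f u = v :=
  ⟨fun h => by cases h; exact ⟨_, ‹_›, rfl⟩, fun ⟨_, hu, hv⟩ => hv ▸ .map f hu⟩

theorem matches_var_iff {x : Var A} {v : A} :
    Matches kd env (.var x) ts v ↔ Matches kd env (env A x) ts v :=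
  ⟨fun h => by cases h; assumption, .var x⟩

theorem matches_seqn_iff {s₂ : Syn Token Kind Var B} {v : A × B} :
    Matches kd env (.seqn s₁ s₂) ts v ↔
      ∃ ts₁ ts₂, ts = ts₁ ++ ts₂ ∧ Matches kd env s₁ ts₁ v.1 ∧ Matches kd env s₂ ts₂ v.2 := by
  refine ⟨fun h => ?_, fun ⟨_, _, hts, h₁, h₂⟩ => hts ▸ .seqn h₁ h₂⟩
  suffices ∀ {C} {S : Syn Token Kind Var C} {ts w}, Matches kd env S ts w →
      S.SeqnCaseVal (fun s₁ s₂ u => ∃ ts₁ ts₂, ts = ts₁ ++ ts₂ ∧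
        Matches kd env s₁ ts₁ u.1 ∧ Matches kd env s₂ ts₂ u.2) w from this h
  intro _ _ _ _ h
  cases h <;> first | trivial | exact ⟨_, _, rfl, ‹_›, ‹_›⟩

theorem nullable_seqn_iff {s₂ : Syn Token Kind Var B} {v : A × B} :
    Nullable env (.seqn s₁ s₂) v ↔ Nullable env s₁ v.1 ∧ Nullable env s₂ v.2 := by
  refine ⟨fun h => ?_, fun ⟨h₁, h₂⟩ => .seqn h₁ h₂⟩
  suffices ∀ {C} {S : Syn Token Kind Var C} {w}, Nullable env S w →
      S.SeqnCaseVal (fun s₁ s₂ u => Nullable env s₁ u.1 ∧ Nullable env s₂ u.2) w from this h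
  intro _ _ _ h
  cases h <;> trivial

theorem productive_seqn_iff {s₂ : Syn Token Kind Var B} :
    Productive env (.seqn s₁ s₂) ↔ Productive env s₁ ∧ Productive env s₂ := by
  refine ⟨fun h => ?_, fun ⟨h₁, h₂⟩ => .seqn h₁ h₂⟩
  suffices ∀ {C} {S : Syn Token Kind Var C}, Productive env S →
      S.SeqnCase (fun s₁ s₂ => Productive env s₁ ∧ Productive env s₂) from this h
  intro _ _ h
  cases h <;> trivial

theorem inFirst_seqn_iff {s₂ : Syn Token Kind Var B} :
    InFirst env k (.seqn s₁ s₂) ↔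
      InFirst env k s₁ ∧ Productive env s₂ ∨ ∃ v, Nullable env s₁ v ∧ InFirst env k s₂ := by
  refine ⟨fun h => ?_, ?_⟩
  · suffices ∀ {C} {S : Syn Token Kind Var C}, InFirst env k S → S.SeqnCase
        (fun s₁ s₂ => InFirst env k s₁ ∧ Productive env s₂ ∨
          ∃ v, Nullable env s₁ v ∧ InFirst env k s₂) from this h
    intro _ _ h
    cases h <;> first | trivial | exact .inl ⟨‹_›, ‹_›⟩ | exact .inr ⟨_, ‹_›, ‹_›⟩
  · rintro (⟨h₁, h₂⟩ | ⟨_, h₁, h₂⟩)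
    exacts [.seqnL h₁ h₂, .seqnR h₁ h₂]

theorem inSNF_seqn_iff {s₂ : Syn Token Kind Var B} :
    InSNF env k (.seqn s₁ s₂) ↔
      InSNF env k s₁ ∧ (∃ v, Nullable env s₂ v) ∨ Productive env s₁ ∧ InSNF env k s₂ := by
  refine ⟨fun h => ?_, ?_⟩
  · suffices ∀ {C} {S : Syn Token Kind Var C}, InSNF env k S → S.SeqnCase
        (fun s₁ s₂ => InSNF env k s₁ ∧ (∃ v, Nullable env s₂ v) ∨
          Productive env s₁ ∧ InSNF env k s₂) from this h
    intro _ _ h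
    cases h <;> first | trivial | exact .inl ⟨‹_›, _, ‹_›⟩ | exact .inr ⟨‹_›, ‹_›⟩
  · rintro (⟨h₁, _, h₂⟩ | ⟨h₁, h₂⟩)
    exacts [.seqnL h₁ h₂, .seqnR h₁ h₂]

theorem hasConflict_seqn_iff {s₂ : Syn Token Kind Var B} :
    HasConflict env (.seqn s₁ s₂) ↔
      (∃ k, InSNF env k s₁ ∧ InFirst env k s₂) ∨ HasConflict env s₁ ∨ HasConflict env s₂ := by
  refine ⟨fun h => ?_, ?_⟩
  · suffices ∀ {C} {S : Syn Token Kind Var C}, HasConflict env S → S.SeqnCase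
        (fun s₁ s₂ => (∃ k, InSNF env k s₁ ∧ InFirst env k s₂) ∨
          HasConflict env s₁ ∨ HasConflict env s₂) from this h
    intro _ _ h
    cases h
    all_goals first
      | trivial
      | exact .inl ⟨_, ‹_›, ‹_›⟩
      | exact .inr (.inl ‹_›)
      | exact .inr (.inr ‹_›)
  · rintro (⟨_, h₁, h₂⟩ | h | h)
    exacts [.seqnSF h₁ h₂, .seqnL h, .seqnR h]

theorem Nullable.matches_nil {v : A} (h : Nullable env s v) : Matches kd env s [] v := by
  induction h with
  | eps v => exact .eps v
  | disjL _ ih => exact .disjL ih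
  | disjR _ ih => exact .disjR ih
  | seqn _ _ ih₁ ih₂ => exact .seqn ih₁ ih₂
  | map f _ ih => exact .map f ih
  | var x _ ih => exact .var x ih

theorem Nullable.productive {v : A} (h : Nullable env s v) : Productive env s := by
  induction h with
  | eps v => exact .eps v
  | disjL _ ih => exact .disjL ih
  | disjR _ ih => exact .disjR ih
  | seqn _ _ ih₁ ih₂ => exact .seqn ih₁ ih₂
  | map f _ ih => exact .map f ih
  | var x _ ih => exact .var x ih

theorem Matches.productive {v : A} (h : Matches kd env s ts v) : Productive env s := by
  induction h with
  | elem => exact .elem _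
  | eps v => exact .eps v
  | disjL _ ih => exact .disjL ih
  | disjR _ ih => exact .disjR ih
  | seqn _ _ ih₁ ih₂ => exact .seqn ih₁ ih₂
  | map f _ ih => exact .map f ih
  | var x _ ih => exact .var x ih

theorem nullable_of_matches_nil {v : A} (h : Matches kd env s [] v) : Nullable env s v := by
  generalize hts : ([] : List Token) = ts' at h
  induction h with
  | elem => simp at hts
  | eps v => exact .eps v
  | disjL _ ih => exact .disjL (ih hts)
  | disjR _ ih => exact .disjR (ih hts)
  | seqn _ _ ih₁ ih₂ =>
    obtain ⟨h₁, h₂⟩ := List.append_eq_nil_iff.mp hts.symm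
    exact .seqn (ih₁ h₁.symm) (ih₂ h₂.symm)
  | map f _ ih => exact .map f (ih hts)
  | var x _ ih => exact .var x (ih hts)

theorem inFirst_of_matches_cons {v : A} (h : Matches kd env s (t :: ts) v) :
    InFirst env (kd t) s := by
  generalize hts : t :: ts = ts' at h
  induction h generalizing ts with
  | elem hk => cases hts; exact hk ▸ .elem _
  | eps v => cases hts
  | disjL _ ih => exact .disjL (ih hts)
  | disjR _ ih => exact .disjR (ih hts)
  | seqn h₁ h₂ ih₁ ih₂ =>
    rcases List.cons_eq_append_iff.mp hts with ⟨rfl, rfl⟩ | ⟨_, rfl, _⟩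
    · exact .seqnR (nullable_of_matches_nil h₁) (ih₂ rfl)
    · exact .seqnL (ih₁ rfl) h₂.productive
  | map f _ ih => exact .map f (ih hts)
  | var x _ ih => exact .var x (ih hts)

theorem InFirst.inSNF_of_nullable {v : A} (hk : InFirst env k s) (hv : Nullable env s v) :
    InSNF env k s := by
  induction hk with
  | elem => cases hv
  | disjL h₁ ih =>
    cases hv with
    | disjL hv => exact .disjL (ih hv)
    | disjR hv => exact .disjFN h₁ hv
  | disjR h₂ ih =>
    cases hv with
    | disjL hv => exact .disjNF hv h₂
    | disjR hv => exact .disjR (ih hv)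
  | seqnL _ _ ih =>
    obtain ⟨hv₁, hv₂⟩ := nullable_seqn_iff.mp hv
    exact .seqnL (ih hv₁) hv₂
  | seqnR hn₁ _ ih =>
    exact .seqnR hn₁.productive (ih (nullable_seqn_iff.mp hv).2)
  | map f _ ih => cases hv; exact .map f (ih ‹_›)
  | var x _ ih => cases hv; exact .var x (ih ‹_›)

theorem Nullable.unique {v w : A} (hC : ¬HasConflict env s) (hv : Nullable env s v)
    (hw : Nullable env s w) : v = w := by
  induction hv with
  | eps => cases hw; rfl
  | disjL hv ih =>
    cases hw with
    | disjL hw => exact ih (fun h => hC (.disjL h)) hw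
    | disjR hw => exact (hC (.disjNN hv hw)).elim
  | disjR hv ih =>
    cases hw with
    | disjL hw => exact (hC (.disjNN hw hv)).elim
    | disjR hw => exact ih (fun h => hC (.disjR h)) hw
  | seqn _ _ ih₁ ih₂ =>
    obtain ⟨hw₁, hw₂⟩ := nullable_seqn_iff.mp hw
    exact Prod.ext (ih₁ (fun h => hC (.seqnL h)) hw₁) (ih₂ (fun h => hC (.seqnR h)) hw₂)
  | map f _ ih => cases hw; exact congrArg f (ih (fun h => hC (.map f h)) ‹_›)
  | var x _ ih => cases hw; exact ih (fun h => hC (.var x h)) ‹_›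

theorem hasConflict_unfocus : ∀ {A B : Type} {s : Syn Token Kind Var A}
    (c : Ctx Token Kind Var A B), HasConflict env s → HasConflict env (unfocus s c)
  | _, _, _, .nil, h => h
  | _, _, _, .cons (.apply f) c, h => hasConflict_unfocus c (.map f h)
  | _, _, _, .cons (.prepend _) c, h => hasConflict_unfocus c (.seqnR h)
  | _, _, _, .cons (.followBy _) c, h => hasConflict_unfocus c (.seqnL h)

theorem unfocus_rel (R : ∀ {A : Type}, Syn Token Kind Var A → Syn Token Kind Var A → Prop)
    (hmap : ∀ {A B : Type} {s s' : Syn Token Kind Var A} (f : A → B),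
      R s s' → R (.map f s) (.map f s'))
    (hprepend : ∀ {A C : Type} {s s' : Syn Token Kind Var A} (v : C),
      R s s' → R (.seqn (.eps v) s) (.seqn (.eps v) s'))
    (hfollowBy : ∀ {A C : Type} {s s' : Syn Token Kind Var A} (s₂ : Syn Token Kind Var C),
      R s s' → R (.seqn s s₂) (.seqn s' s₂)) :
    ∀ {A B : Type} (c : Ctx Token Kind Var A B) {s s' : Syn Token Kind Var A},
      R s s' → R (unfocus s c) (unfocus s' c)
  | _, _, .nil, _, _, h => h
  | _, _, .cons (.apply f) c, _, _, h => unfocus_rel R hmap hprepend hfollowBy c (hmap f h)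
  | _, _, .cons (.prepend v) c, _, _, h => unfocus_rel R hmap hprepend hfollowBy c (hprepend v h)
  | _, _, .cons (.followBy s₂) c, _, _, h =>
    unfocus_rel R hmap hprepend hfollowBy c (hfollowBy s₂ h)

structure AnalysisLE (env : ∀ A : Type, Var A → Syn Token Kind Var A)
    (S₁ S₂ : Syn Token Kind Var A) : Prop where
  hasConflict : HasConflict env S₁ → HasConflict env S₂
  inFirst : ∀ k, InFirst env k S₁ → InFirst env k S₂
  nullable : ∀ v, Nullable env S₁ v → Nullable env S₂ v
  inSNF : ∀ k, InSNF env k S₁ → InSNF env k S₂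
  productive : Productive env S₁ → Productive env S₂

namespace AnalysisLE

theorem refl (S : Syn Token Kind Var A) : AnalysisLE env S S :=
  ⟨id, fun _ => id, fun _ => id, fun _ => id, id⟩

theorem of_nullable {S : Syn Token Kind Var A} {v : A} (hv : Nullable env S v) :
    AnalysisLE env (.eps v) S where
  hasConflict h := by cases h
  inFirst _ h := by cases h
  nullable _ h := by cases h; exact hv
  inSNF _ h := by cases h
  productive _ := hv.productive

theorem disj_left : AnalysisLE env s₁ (.disj s₁ s₂) :=
  ⟨.disjL, fun _ => .disjL, fun _ => .disjL, fun _ => .disjL, .disjL⟩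

theorem disj_right : AnalysisLE env s₂ (.disj s₁ s₂) :=
  ⟨.disjR, fun _ => .disjR, fun _ => .disjR, fun _ => .disjR, .disjR⟩

theorem var (x : Var A) : AnalysisLE env (env A x) (.var x) :=
  ⟨.var x, fun _ => .var x, fun _ => .var x, fun _ => .var x, .var x⟩

theorem map (f : A → B) (h : AnalysisLE env s₁ s₂) : AnalysisLE env (.map f s₁) (.map f s₂) where
  hasConflict h' := by cases h'; exact .map f (h.hasConflict ‹_›)
  inFirst k h' := by cases h'; exact .map f (h.inFirst k ‹_›)
  nullable v h' := by cases h'; exact .map f (h.nullable _ ‹_›)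
  inSNF k h' := by cases h'; exact .map f (h.inSNF k ‹_›)
  productive h' := by cases h'; exact .map f (h.productive ‹_›)

theorem seqn {b₁ b₂ : Syn Token Kind Var B} (ha : AnalysisLE env s₁ s₂)
    (hb : AnalysisLE env b₁ b₂) : AnalysisLE env (.seqn s₁ b₁) (.seqn s₂ b₂) where
  hasConflict h := by
    rcases hasConflict_seqn_iff.mp h with ⟨k, h₁, h₂⟩ | h | h
    exacts [.seqnSF (ha.inSNF k h₁) (hb.inFirst k h₂), .seqnL (ha.hasConflict h),
      .seqnR (hb.hasConflict h)]
  inFirst k h := by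
    rcases inFirst_seqn_iff.mp h with ⟨h₁, h₂⟩ | ⟨v, h₁, h₂⟩
    exacts [.seqnL (ha.inFirst k h₁) (hb.productive h₂),
      .seqnR (ha.nullable v h₁) (hb.inFirst k h₂)]
  nullable v h := by
    obtain ⟨h₁, h₂⟩ := nullable_seqn_iff.mp h
    exact .seqn (ha.nullable _ h₁) (hb.nullable _ h₂)
  inSNF k h := by
    rcases inSNF_seqn_iff.mp h with ⟨h₁, v, h₂⟩ | ⟨h₁, h₂⟩
    exacts [.seqnL (ha.inSNF k h₁) (hb.nullable v h₂), .seqnR (ha.productive h₁) (hb.inSNF k h₂)]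
  productive h := by
    obtain ⟨h₁, h₂⟩ := productive_seqn_iff.mp h
    exact .seqn (ha.productive h₁) (hb.productive h₂)

theorem unfocus_ctx (c : Ctx Token Kind Var A B) (h : AnalysisLE env s₁ s₂) :
    AnalysisLE env (unfocus s₁ c) (unfocus s₂ c) :=
  unfocus_rel (AnalysisLE env) (fun f => .map f) (fun _ h => (refl _).seqn h)
    (fun s₂ h => h.seqn (refl s₂)) c h

theorem not_hasConflict_unfocus (h : AnalysisLE env s₁ s₂) {c : Ctx Token Kind Var A B}
    (hC : ¬HasConflict env (unfocus s₂ c)) : ¬HasConflict env (unfocus s₁ c) :=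
  fun h' => hC ((h.unfocus_ctx c).hasConflict h')

theorem unfocusF_plug : ∀ {A B : Type} (c : Ctx Token Kind Var A B) {S : Syn Token Kind Var A}
    {v : A}, Nullable env S v → AnalysisLE env (unfocusF (plug v c)) (unfocus S c)
  | _, _, .nil, _, _, hv => of_nullable hv
  | _, _, .cons (.apply f) c, _, _, hv => unfocusF_plug c (.map f hv)
  | _, _, .cons (.prepend v') c, _, _, hv => unfocusF_plug c (.seqn (.eps v') hv)
  | _, _, .cons (.followBy s') c, _, _, hv => ((of_nullable hv).seqn (refl s')).unfocus_ctx c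

end AnalysisLE

theorem unfocus_mono (c : Ctx Token Kind Var A B)
    (h : ∀ ts w, Matches kd env s₁ ts w → Matches kd env s₂ ts w) (ts : List Token) (w : B) :
    Matches kd env (unfocus s₁ c) ts w → Matches kd env (unfocus s₂ c) ts w := by
  refine unfocus_rel (fun s s' => ∀ ts w, Matches kd env s ts w → Matches kd env s' ts w)
    ?_ ?_ ?_ c h ts w
  · intro _ _ _ _ f h ts w hm
    obtain ⟨u, hu, rfl⟩ := matches_map_iff.mp hm
    exact .map f (h _ _ hu)
  · intro _ _ _ _ _ h ts w hm
    obtain ⟨_, _, rfl, h₁, h₂⟩ := matches_seqn_iff.mp hm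
    exact .seqn h₁ (h _ _ h₂)
  · intro _ _ _ _ _ h ts w hm
    obtain ⟨_, _, rfl, h₁, h₂⟩ := matches_seqn_iff.mp hm
    exact .seqn (h _ _ h₁) h₂

theorem unfocus_congr (c : Ctx Token Kind Var A B)
    (h : ∀ ts w, Matches kd env s₁ ts w ↔ Matches kd env s₂ ts w) (ts : List Token) (w : B) :
    Matches kd env (unfocus s₁ c) ts w ↔ Matches kd env (unfocus s₂ c) ts w :=
  ⟨unfocus_mono c (fun ts w => (h ts w).1) ts w, unfocus_mono c (fun ts w => (h ts w).2) ts w⟩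

theorem matches_unfocusF_plug : ∀ {A B : Type} (c : Ctx Token Kind Var A B) (v : A)
    (ts : List Token) (w : B),
    Matches kd env (unfocusF (plug v c)) ts w ↔ Matches kd env (unfocus (.eps v) c) ts w
  | _, _, .nil, _, _, _ => .rfl
  | _, _, .cons (.apply f) c, v, ts, w =>
    (matches_unfocusF_plug c (f v) ts w).trans <| unfocus_congr c (fun ts w => by
      simp only [matches_map_iff, matches_eps_iff]; grind) ts w
  | _, _, .cons (.prepend v') c, v, ts, w =>
    (matches_unfocusF_plug c (v', v) ts w).trans <| unfocus_congr c (fun ts w => by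
      simp only [matches_seqn_iff, matches_eps_iff]; grind) ts w
  | _, _, .cons (.followBy _) _, _, _, _ => .rfl

theorem unfocus_shift (c : Ctx Token Kind Var A B)
    (hiff : ∀ ts w, Matches kd env s₁ ts w ↔ Matches kd env s₂ (t :: ts) w)
    (hnil : ∀ w, ¬Matches kd env s₂ [] w) (ts : List Token) (w : B) :
    Matches kd env (unfocus s₁ c) ts w ↔ Matches kd env (unfocus s₂ c) (t :: ts) w := by
  refine (unfocus_rel (fun s s' => (∀ ts w, Matches kd env s ts w ↔
    Matches kd env s' (t :: ts) w) ∧ ∀ w, ¬Matches kd env s' [] w) ?_ ?_ ?_ c ⟨hiff, hnil⟩).1 ts w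
  · rintro _ _ _ _ f ⟨hiff, hnil⟩
    refine ⟨fun ts w => ?_, fun w hm => ?_⟩
    · simp only [matches_map_iff, hiff]
    · obtain ⟨u, hu, -⟩ := matches_map_iff.mp hm
      exact hnil u hu
  · rintro _ _ _ _ v ⟨hiff, hnil⟩
    refine ⟨fun ts w => ?_, fun w hm => ?_⟩
    · simp only [matches_seqn_iff, matches_eps_iff]
      grind
    · obtain ⟨_, _, hts, -, h₂⟩ := matches_seqn_iff.mp hm
      obtain ⟨-, rfl⟩ := List.append_eq_nil_iff.mp hts.symm
      exact hnil _ h₂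
  · rintro _ _ _ _ _ ⟨hiff, hnil⟩
    refine ⟨fun ts w => ⟨fun hm => ?_, fun hm => ?_⟩, fun w hm => ?_⟩
    · obtain ⟨ts₁, ts₂, rfl, h₁, h₂⟩ := matches_seqn_iff.mp hm
      exact .seqn ((hiff _ _).mp h₁) h₂
    · obtain ⟨ts₁, ts₂, hts, h₁, h₂⟩ := matches_seqn_iff.mp hm
      rcases List.cons_eq_append_iff.mp hts with ⟨rfl, -⟩ | ⟨ts₁, rfl, rfl⟩
      · exact (hnil _ h₁).elim
      · exact .seqn ((hiff _ _).mpr h₁) h₂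
    · obtain ⟨_, _, hts, h₁, -⟩ := matches_seqn_iff.mp hm
      obtain ⟨rfl, -⟩ := List.append_eq_nil_iff.mp hts.symm
      exact hnil _ h₁

theorem unfocus_eps_iff_elem (c : Ctx Token Kind Var Token B) (ts : List Token) (w : B) :
    Matches kd env (unfocus (.eps t) c) ts w ↔
      Matches kd env (unfocus (.elem (kd t)) c) (t :: ts) w :=
  unfocus_shift c (fun ts w => by simp only [matches_eps_iff, matches_elem_iff]; grind)
    (fun w hm => by simp [matches_elem_iff] at hm) ts w

-- The `InSNF` escape is harmless in an LL(1) context, where `kd t ∈ ShouldNotFollow s₂` rules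
-- out parses of `t :: ts` that read the empty word with `s₂`.
def Recovers (kd : Token → Kind) (env : ∀ A : Type, Var A → Syn Token Kind Var A) (t : Token)
    (s₁ s₂ : Syn Token Kind Var A) : Prop :=
  (∀ ts w, Matches kd env s₂ (t :: ts) w → Matches kd env s₁ (t :: ts) w) ∧
    ∀ w, Matches kd env s₂ [] w → Matches kd env s₁ [] w ∨ InSNF env (kd t) s₂

namespace Recovers

theorem map (f : A → B) (h : Recovers kd env t s₁ s₂) :
    Recovers kd env t (.map f s₁) (.map f s₂) := by
  refine ⟨fun ts w hm => ?_, fun w hm => ?_⟩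
  · obtain ⟨u, hu, rfl⟩ := matches_map_iff.mp hm
    exact .map f (h.1 _ _ hu)
  · obtain ⟨u, hu, rfl⟩ := matches_map_iff.mp hm
    exact (h.2 u hu).imp (.map f) (.map f)

theorem prepend {C : Type} (v : C) (h : Recovers kd env t s₁ s₂) :
    Recovers kd env t (.seqn (.eps v) s₁) (.seqn (.eps v) s₂) := by
  refine ⟨fun ts w hm => ?_, fun w hm => ?_⟩
  · obtain ⟨_, _, hts, h₁, h₂⟩ := matches_seqn_iff.mp hm
    obtain ⟨rfl, -⟩ := matches_eps_iff.mp h₁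
    rw [List.nil_append] at hts
    subst hts
    exact .seqn h₁ (h.1 _ _ h₂)
  · obtain ⟨_, _, hts, h₁, h₂⟩ := matches_seqn_iff.mp hm
    obtain ⟨rfl, rfl⟩ := List.append_eq_nil_iff.mp hts.symm
    exact (h.2 _ h₂).imp (.seqn h₁) (.seqnR (.eps v))

theorem followBy {C : Type} (s' : Syn Token Kind Var C) (h : Recovers kd env t s₁ s₂)
    (hC : ¬HasConflict env (.seqn s₂ s')) :
    Recovers kd env t (.seqn s₁ s') (.seqn s₂ s') := by
  refine ⟨fun ts w hm => ?_, fun w hm => ?_⟩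
  · obtain ⟨ts₁, ts₂, hts, h₁, h₂⟩ := matches_seqn_iff.mp hm
    rcases List.cons_eq_append_iff.mp hts with ⟨rfl, rfl⟩ | ⟨ts₁, rfl, rfl⟩
    · rcases h.2 _ h₁ with h₁ | hsnf
      · exact .seqn h₁ h₂
      · exact (hC (.seqnSF hsnf (inFirst_of_matches_cons h₂))).elim
    · exact .seqn (h.1 _ _ h₁) h₂
  · obtain ⟨_, _, hts, h₁, h₂⟩ := matches_seqn_iff.mp hm
    obtain ⟨rfl, rfl⟩ := List.append_eq_nil_iff.mp hts.symm
    exact (h.2 _ h₁).imp (.seqn · h₂) (.seqnL · (nullable_of_matches_nil h₂))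

end Recovers

theorem unfocus_iff_of_recovers (c : Ctx Token Kind Var A B)
    (hsub : ∀ ts w, Matches kd env s₁ ts w → Matches kd env s₂ ts w)
    (hrec : Recovers kd env t s₁ s₂) (hC : ¬HasConflict env (unfocus s₂ c))
    (ts : List Token) (w : B) :
    Matches kd env (unfocus s₁ c) (t :: ts) w ↔ Matches kd env (unfocus s₂ c) (t :: ts) w := by
  refine ⟨unfocus_mono c hsub _ _, ?_⟩
  refine (unfocus_rel (fun s s' => ¬HasConflict env s' → Recovers kd env t s s')
    ?_ ?_ ?_ c (fun _ => hrec) hC).1 ts w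
  · exact fun f h hC => (h fun h' => hC (.map f h')).map f
  · exact fun v h hC => (h fun h' => hC (.seqnR h')).prepend v
  · exact fun s' h hC => (h fun h' => hC (.seqnL h')).followBy s' hC

theorem unfocus_disj_left_iff {c : Ctx Token Kind Var A B} (hf : InFirst env (kd t) s₁)
    (hC : ¬HasConflict env (unfocus (.disj s₁ s₂) c)) (ts : List Token) (w : B) :
    Matches kd env (unfocus s₁ c) (t :: ts) w ↔
      Matches kd env (unfocus (.disj s₁ s₂) c) (t :: ts) w := by
  have hd : ¬HasConflict env (.disj s₁ s₂) := mt (hasConflict_unfocus c) hC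
  refine unfocus_iff_of_recovers c (fun _ _ => .disjL) ⟨fun ts w hm => ?_, fun w hm => ?_⟩ hC ts w
  · rcases matches_disj_iff.mp hm with hm | hm
    exacts [hm, (hd (.disjFF hf (inFirst_of_matches_cons hm))).elim]
  · rcases matches_disj_iff.mp hm with hm | hm
    exacts [.inl hm, .inr (.disjFN hf (nullable_of_matches_nil hm))]

theorem unfocus_disj_right_iff {c : Ctx Token Kind Var A B} (hf : InFirst env (kd t) s₂)
    (hC : ¬HasConflict env (unfocus (.disj s₁ s₂) c)) (ts : List Token) (w : B) :
    Matches kd env (unfocus s₂ c) (t :: ts) w ↔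
      Matches kd env (unfocus (.disj s₁ s₂) c) (t :: ts) w := by
  have hd : ¬HasConflict env (.disj s₁ s₂) := mt (hasConflict_unfocus c) hC
  refine unfocus_iff_of_recovers c (fun _ _ => .disjR) ⟨fun ts w hm => ?_, fun w hm => ?_⟩ hC ts w
  · rcases matches_disj_iff.mp hm with hm | hm
    exacts [(hd (.disjFF (inFirst_of_matches_cons hm) hf)).elim, hm]
  · rcases matches_disj_iff.mp hm with hm | hm
    exacts [.inr (.disjNF (nullable_of_matches_nil hm) hf), .inl hm]

theorem unfocus_eps_iff_of_nullable {c : Ctx Token Kind Var A B} {v : A}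
    (hv : Nullable env s v) (hf : ¬InFirst env (kd t) s)
    (hC : ¬HasConflict env (unfocus s c)) (ts : List Token) (w : B) :
    Matches kd env (unfocus (.eps v) c) (t :: ts) w ↔
      Matches kd env (unfocus s c) (t :: ts) w := by
  have hs : ¬HasConflict env s := mt (hasConflict_unfocus c) hC
  refine unfocus_iff_of_recovers c (fun ts w hm => ?_)
    ⟨fun ts w hm => (hf (inFirst_of_matches_cons hm)).elim, fun w hm => .inl ?_⟩ hC ts w
  · obtain ⟨rfl, rfl⟩ := matches_eps_iff.mp hm
    exact hv.matches_nil
  · exact hv.unique hs (nullable_of_matches_nil hm) ▸ .eps v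

theorem unfocus_var_iff (c : Ctx Token Kind Var A B) (x : Var A) (ts : List Token) (w : B) :
    Matches kd env (unfocus (env A x) c) ts w ↔ Matches kd env (unfocus (.var x) c) ts w :=
  unfocus_congr c (fun _ _ => matches_var_iff.symm) ts w

structure IsPierce (env : ∀ A : Type, Var A → Syn Token Kind Var A)
    (nullOpt : ∀ {A : Type}, Syn Token Kind Var A → Option A)
    (pierce : ∀ {A B : Type}, Kind → Syn Token Kind Var A → Ctx Token Kind Var A B →
      Ctx Token Kind Var Token B) : Prop where
  elem : ∀ {B : Type} (k : Kind) (c : Ctx Token Kind Var Token B),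
    pierce k (Syn.elem k) c = c
  disj_left : ∀ {A B : Type} (k : Kind) (s₁ s₂ : Syn Token Kind Var A)
    (c : Ctx Token Kind Var A B),
    ¬ HasConflict env (Syn.disj s₁ s₂) → InFirst env k (Syn.disj s₁ s₂) →
    InFirst env k s₁ → pierce k (Syn.disj s₁ s₂) c = pierce k s₁ c
  disj_right : ∀ {A B : Type} (k : Kind) (s₁ s₂ : Syn Token Kind Var A)
    (c : Ctx Token Kind Var A B),
    ¬ HasConflict env (Syn.disj s₁ s₂) → InFirst env k (Syn.disj s₁ s₂) →
    ¬ InFirst env k s₁ → pierce k (Syn.disj s₁ s₂) c = pierce k s₂ c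
  seqn_left : ∀ {A B C : Type} (k : Kind) (s₁ : Syn Token Kind Var A)
    (s₂ : Syn Token Kind Var B) (c : Ctx Token Kind Var (A × B) C),
    ¬ HasConflict env (Syn.seqn s₁ s₂) → InFirst env k (Syn.seqn s₁ s₂) →
    (nullOpt s₁ = none ∨ InFirst env k s₁) →
    pierce k (Syn.seqn s₁ s₂) c = pierce k s₁ (Ctx.cons (Layer.followBy s₂) c)
  seqn_right : ∀ {A B C : Type} (k : Kind) (s₁ : Syn Token Kind Var A)
    (s₂ : Syn Token Kind Var B) (c : Ctx Token Kind Var (A × B) C) (v : A),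
    ¬ HasConflict env (Syn.seqn s₁ s₂) → InFirst env k (Syn.seqn s₁ s₂) →
    nullOpt s₁ = some v → ¬ InFirst env k s₁ →
    pierce k (Syn.seqn s₁ s₂) c = pierce k s₂ (Ctx.cons (Layer.prepend v) c)
  map : ∀ {A B C : Type} (k : Kind) (f : A → B) (s : Syn Token Kind Var A)
    (c : Ctx Token Kind Var B C),
    ¬ HasConflict env (Syn.map f s) → InFirst env k (Syn.map f s) →
    pierce k (Syn.map f s) c = pierce k s (Ctx.cons (Layer.apply f) c)
  var : ∀ {A B : Type} (k : Kind) (x : Var A) (c : Ctx Token Kind Var A B),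
    ¬ HasConflict env (Syn.var x : Syn Token Kind Var A) →
    InFirst env k (Syn.var x : Syn Token Kind Var A) →
    pierce k (Syn.var x) c = pierce k (env A x) c

theorem matches_unfocus_pierce
    {nullOpt : ∀ {A : Type}, Syn Token Kind Var A → Option A}
    {pierce : ∀ {A B : Type}, Kind → Syn Token Kind Var A → Ctx Token Kind Var A B →
      Ctx Token Kind Var Token B}
    (hnull : ∀ {A : Type} (s : Syn Token Kind Var A), ¬ HasConflict env s →
      ∀ v : A, nullOpt s = some v ↔ Nullable env s v)
    (hp : IsPierce env nullOpt pierce) (hf : InFirst env (kd t) s) :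
    ∀ {B : Type} (c : Ctx Token Kind Var A B), ¬HasConflict env (unfocus s c) →
      ∀ ts w, Matches kd env (unfocus (.eps t) (pierce (kd t) s c)) ts w ↔
        Matches kd env (unfocus s c) (t :: ts) w := by
  generalize hk : kd t = k at hf
  induction hf with
  | elem => subst hk; intro B c _ ts w; rw [hp.elem]; exact unfocus_eps_iff_elem c ts w
  | disjL hf₁ ih =>
    subst hk
    intro B c hC ts w
    rw [hp.disj_left _ _ _ c (mt (hasConflict_unfocus c) hC) (.disjL hf₁) hf₁]
    exact (ih rfl c (AnalysisLE.disj_left.not_hasConflict_unfocus hC) ts w).trans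
      (unfocus_disj_left_iff hf₁ hC ts w)
  | disjR hf₂ ih =>
    subst hk
    intro B c hC ts w
    have hd := mt (hasConflict_unfocus c) hC
    rw [hp.disj_right _ _ _ c hd (.disjR hf₂) fun hf₁ => hd (.disjFF hf₁ hf₂)]
    exact (ih rfl c (AnalysisLE.disj_right.not_hasConflict_unfocus hC) ts w).trans
      (unfocus_disj_right_iff hf₂ hC ts w)
  | @seqnL _ _ _ _ s₂ hf₁ hp₂ ih =>
    intro B c hC
    rw [hp.seqn_left _ _ _ c (mt (hasConflict_unfocus c) hC) (.seqnL hf₁ hp₂) (.inr hf₁)]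
    exact ih hk (.cons (.followBy s₂) c) hC
  | @seqnR _ _ _ s₁ s₂ v hv₁ hf₂ ih =>
    subst hk
    intro B c hC ts w
    have hs := mt (hasConflict_unfocus c) hC
    have hf₁ : ¬InFirst env (kd t) s₁ := fun hf₁ => hs (.seqnSF (hf₁.inSNF_of_nullable hv₁) hf₂)
    have hnv : nullOpt s₁ = some v := (hnull s₁ (fun h => hs (.seqnL h)) v).mpr hv₁
    rw [hp.seqn_right _ _ _ c v hs (.seqnR hv₁ hf₂) hnv hf₁]
    have hC' : ¬HasConflict env (unfocus (.eps v) (.cons (.followBy s₂) c)) :=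
      (AnalysisLE.of_nullable hv₁).not_hasConflict_unfocus hC
    exact (ih rfl (.cons (.prepend v) c) hC' ts w).trans
      (unfocus_eps_iff_of_nullable (c := .cons (.followBy s₂) c) hv₁ hf₁ hC ts w)
  | map f hf ih =>
    intro B c hC
    rw [hp.map _ _ _ c (mt (hasConflict_unfocus c) hC) (.map f hf)]
    exact ih hk (.cons (.apply f) c) hC
  | var x hf ih =>
    subst hk
    intro B c hC ts w
    rw [hp.var _ _ c (mt (hasConflict_unfocus c) hC) (.var x hf)]
    exact (ih rfl c ((AnalysisLE.var x).not_hasConflict_unfocus hC) ts w).trans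
      (unfocus_var_iff c x (t :: ts) w)

-- `followBy` weighs two because `plug` turns it into a `prepend`.
def ctxSize : ∀ {A B : Type}, Ctx Token Kind Var A B → ℕ
  | _, _, .nil => 0
  | _, _, .cons (.followBy _) c => ctxSize c + 2
  | _, _, .cons (.apply _) c => ctxSize c + 1
  | _, _, .cons (.prepend _) c => ctxSize c + 1

theorem ctxSize_plug_le : ∀ {A B : Type} (c : Ctx Token Kind Var A B) (v : A),
    ctxSize (plug v c).2.2 ≤ ctxSize c
  | _, _, .nil, _ => le_rfl
  | _, _, .cons (.apply f) c, v => (ctxSize_plug_le c (f v)).trans (Nat.le_succ _)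
  | _, _, .cons (.prepend v') c, v => (ctxSize_plug_le c (v', v)).trans (Nat.le_succ _)
  | _, _, .cons (.followBy _) _, _ => Nat.le_succ _

theorem ctxSize_plug_lt : ∀ {A B : Type} (c : Ctx Token Kind Var A B) (v : A),
    c.isNil = false → ctxSize (plug v c).2.2 < ctxSize c
  | _, _, .cons (.apply f) c, v, _ => Nat.lt_succ_of_le (ctxSize_plug_le c (f v))
  | _, _, .cons (.prepend v') c, v, _ => Nat.lt_succ_of_le (ctxSize_plug_le c (v', v))
  | _, _, .cons (.followBy _) _, _, _ => Nat.lt_succ_self _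

structure IsLocate (env : ∀ A : Type, Var A → Syn Token Kind Var A)
    (nullOpt : ∀ {A : Type}, Syn Token Kind Var A → Option A)
    (locate : ∀ {B : Type}, Kind → Focused Token Kind Var B →
      Option (Focused Token Kind Var B)) : Prop where
  of_inFirst : ∀ {A B : Type} (k : Kind) (s : Syn Token Kind Var A)
    (c : Ctx Token Kind Var A B), InFirst env k s →
    locate k (⟨A, s, c⟩ : Focused Token Kind Var B) =
      some (⟨A, s, c⟩ : Focused Token Kind Var B)
  of_nullOpt_some : ∀ {A B : Type} (k : Kind) (s : Syn Token Kind Var A)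
    (c : Ctx Token Kind Var A B) (v : A),
    ¬ InFirst env k s → nullOpt s = some v → c.isNil = false →
    locate k (⟨A, s, c⟩ : Focused Token Kind Var B) = locate k (plug v c)
  of_nullOpt_none : ∀ {A B : Type} (k : Kind) (s : Syn Token Kind Var A)
    (c : Ctx Token Kind Var A B),
    ¬ InFirst env k s → nullOpt s = none →
    locate k (⟨A, s, c⟩ : Focused Token Kind Var B) = none
  of_nil : ∀ {A : Type} (k : Kind) (s : Syn Token Kind Var A),
    ¬ InFirst env k s →
    locate k (⟨A, s, Ctx.nil⟩ : Focused Token Kind Var A) = none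

theorem locate_eq_some
    {nullOpt : ∀ {A : Type}, Syn Token Kind Var A → Option A}
    {locate : ∀ {B : Type}, Kind → Focused Token Kind Var B → Option (Focused Token Kind Var B)}
    (hnull : ∀ {A : Type} (s : Syn Token Kind Var A), ¬ HasConflict env s →
      ∀ v : A, nullOpt s = some v ↔ Nullable env s v)
    (hl : IsLocate env nullOpt locate) (t : Token) {fs : Focused Token Kind Var B} :
    ∀ {A : Type} (s : Syn Token Kind Var A) (c : Ctx Token Kind Var A B),
      ¬HasConflict env (unfocus s c) → locate (kd t) ⟨A, s, c⟩ = some fs →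
      InFirst env (kd t) fs.2.1 ∧ ¬HasConflict env (unfocusF fs) ∧
        ∀ ts w, Matches kd env (unfocusF fs) (t :: ts) w ↔
          Matches kd env (unfocus s c) (t :: ts) w := by
  intro A s c
  induction hn : ctxSize c using Nat.strong_induction_on generalizing A s c with
  | _ n ih =>
  intro hC hloc
  by_cases hf : InFirst env (kd t) s
  · rw [hl.of_inFirst _ s c hf] at hloc
    obtain rfl := Option.some.inj hloc
    exact ⟨hf, hC, fun _ _ => .rfl⟩
  rcases hno : nullOpt s with _ | v
  · simp [hl.of_nullOpt_none _ s c hf hno] at hloc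
  cases c with
  | nil => simp [hl.of_nil _ s hf] at hloc
  | cons l c =>
    have hv : Nullable env s v := (hnull s (mt (hasConflict_unfocus _) hC) v).mp hno
    rw [hl.of_nullOpt_some _ s _ v hf hno rfl] at hloc
    obtain ⟨hf', hC', hiff⟩ := ih _ (hn ▸ ctxSize_plug_lt _ v rfl) _ _ rfl
      (mt (AnalysisLE.unfocusF_plug _ hv).hasConflict hC) hloc
    exact ⟨hf', hC', fun ts w => (hiff ts w).trans <|
      (matches_unfocusF_plug _ v (t :: ts) w).trans (unfocus_eps_iff_of_nullable hv hf hC ts w)⟩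

end

section

variable {Token Kind : Type} {Var : Type → Type}
variable (kd : Token → Kind) (env : ∀ A : Type, Var A → Syn Token Kind Var A)

theorem deriveF_correct
    (nullOpt : ∀ {A : Type}, Syn Token Kind Var A → Option A)
    (hnull : ∀ {A : Type} (s : Syn Token Kind Var A), ¬ HasConflict env s →
      ∀ v : A, nullOpt s = some v ↔ Nullable env s v)
    (locate : ∀ {B : Type}, Kind → Focused Token Kind Var B →
      Option (Focused Token Kind Var B))
    (hlocate_first : ∀ {A B : Type} (k : Kind) (s : Syn Token Kind Var A)
      (c : Ctx Token Kind Var A B), InFirst env k s →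
      locate k (⟨A, s, c⟩ : Focused Token Kind Var B) =
        some (⟨A, s, c⟩ : Focused Token Kind Var B))
    (hlocate_plug : ∀ {A B : Type} (k : Kind) (s : Syn Token Kind Var A)
      (c : Ctx Token Kind Var A B) (v : A),
      ¬ InFirst env k s → nullOpt s = some v → c.isNil = false →
      locate k (⟨A, s, c⟩ : Focused Token Kind Var B) = locate k (plug v c))
    (hlocate_none₁ : ∀ {A B : Type} (k : Kind) (s : Syn Token Kind Var A)
      (c : Ctx Token Kind Var A B),
      ¬ InFirst env k s → nullOpt s = none →
      locate k (⟨A, s, c⟩ : Focused Token Kind Var B) = none)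
    (hlocate_none₂ : ∀ {A : Type} (k : Kind) (s : Syn Token Kind Var A),
      ¬ InFirst env k s →
      locate k (⟨A, s, Ctx.nil⟩ : Focused Token Kind Var A) = none)
    (pierce : ∀ {A B : Type}, Kind → Syn Token Kind Var A → Ctx Token Kind Var A B →
      Ctx Token Kind Var Token B)
    (hpierce_elem : ∀ {B : Type} (k : Kind) (c : Ctx Token Kind Var Token B),
      pierce k (Syn.elem k) c = c)
    (hpierce_disj₁ : ∀ {A B : Type} (k : Kind) (s₁ s₂ : Syn Token Kind Var A)
      (c : Ctx Token Kind Var A B),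
      ¬ HasConflict env (Syn.disj s₁ s₂) → InFirst env k (Syn.disj s₁ s₂) →
      InFirst env k s₁ → pierce k (Syn.disj s₁ s₂) c = pierce k s₁ c)
    (hpierce_disj₂ : ∀ {A B : Type} (k : Kind) (s₁ s₂ : Syn Token Kind Var A)
      (c : Ctx Token Kind Var A B),
      ¬ HasConflict env (Syn.disj s₁ s₂) → InFirst env k (Syn.disj s₁ s₂) →
      ¬ InFirst env k s₁ → pierce k (Syn.disj s₁ s₂) c = pierce k s₂ c)
    (hpierce_seqn₁ : ∀ {A B C : Type} (k : Kind) (s₁ : Syn Token Kind Var A)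
      (s₂ : Syn Token Kind Var B) (c : Ctx Token Kind Var (A × B) C),
      ¬ HasConflict env (Syn.seqn s₁ s₂) → InFirst env k (Syn.seqn s₁ s₂) →
      (nullOpt s₁ = none ∨ InFirst env k s₁) →
      pierce k (Syn.seqn s₁ s₂) c = pierce k s₁ (Ctx.cons (Layer.followBy s₂) c))
    (hpierce_seqn₂ : ∀ {A B C : Type} (k : Kind) (s₁ : Syn Token Kind Var A)
      (s₂ : Syn Token Kind Var B) (c : Ctx Token Kind Var (A × B) C) (v : A),
      ¬ HasConflict env (Syn.seqn s₁ s₂) → InFirst env k (Syn.seqn s₁ s₂) →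
      nullOpt s₁ = some v → ¬ InFirst env k s₁ →
      pierce k (Syn.seqn s₁ s₂) c = pierce k s₂ (Ctx.cons (Layer.prepend v) c))
    (hpierce_map : ∀ {A B C : Type} (k : Kind) (f : A → B) (s : Syn Token Kind Var A)
      (c : Ctx Token Kind Var B C),
      ¬ HasConflict env (Syn.map f s) → InFirst env k (Syn.map f s) →
      pierce k (Syn.map f s) c = pierce k s (Ctx.cons (Layer.apply f) c))
    (hpierce_var : ∀ {A B : Type} (k : Kind) (x : Var A) (c : Ctx Token Kind Var A B),
      ¬ HasConflict env (Syn.var x : Syn Token Kind Var A) →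
      InFirst env k (Syn.var x : Syn Token Kind Var A) →
      pierce k (Syn.var x) c = pierce k (env A x) c)
    (deriveF : ∀ {B : Type}, Token → Focused Token Kind Var B →
      Option (Focused Token Kind Var B))
    (hderiveF_none : ∀ {B : Type} (t : Token) (fs : Focused Token Kind Var B),
      locate (kd t) fs = none → deriveF t fs = none)
    (hderiveF_some : ∀ {B : Type} (t : Token) (fs fs' : Focused Token Kind Var B),
      locate (kd t) fs = some fs' →
      deriveF t fs =
        some (⟨Token, Syn.eps t, pierce (kd t) fs'.2.1 fs'.2.2⟩ : Focused Token Kind Var B))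
    {A B : Type} (s : Syn Token Kind Var A) (c : Ctx Token Kind Var A B) (t : Token)
    (hll1 : ¬ HasConflict env (unfocus s c)) (fs' : Focused Token Kind Var B)
    (h : deriveF t (⟨A, s, c⟩ : Focused Token Kind Var B) = some fs')
    (ts : List Token) (v : B) :
    Matches kd env (unfocusF fs') ts v ↔ Matches kd env (unfocus s c) (t :: ts) v := by
  have hp : IsPierce env nullOpt pierce := ⟨hpierce_elem, hpierce_disj₁, hpierce_disj₂,
    hpierce_seqn₁, hpierce_seqn₂, hpierce_map, hpierce_var⟩
  have hl : IsLocate env nullOpt locate :=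
    ⟨hlocate_first, hlocate_plug, hlocate_none₁, hlocate_none₂⟩
  cases hloc : locate (kd t) (⟨A, s, c⟩ : Focused Token Kind Var B) with
  | none => simp [hderiveF_none t _ hloc] at h
  | some fs =>
    obtain ⟨hf, hC, hiff⟩ := locate_eq_some hnull hl t s c hll1 hloc
    rw [hderiveF_some t _ _ hloc] at h
    obtain rfl := Option.some.inj h
    exact (matches_unfocus_pierce hnull hp hf fs.2.2 hC ts v).trans (hiff ts v)

end
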